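/- arXiv:1205.5053 — 2 statements merged into one kernel-verified Lean document; each statement's English description precedes it below -/
import Mathlib

section
/- Let S be a subfield of a field K, A an S-algebra, and F any field extension of S. If f ∈ S⟨x₁,...,x_d⟩ is a multilinear polynomial such that f = 0 is a polynomial identity for A, then f = 0 is a polynomial identity for F ⊗_S A. -/
open scoped TensorProduct

/-- `f` is multilinear: a `K`-linear combination of permutation monomials. -/
def IsMultilinearPoly (K : Type*) [CommSemiring K] (d : ℕ)
    (f : FreeAlgebra K (Fin d)) : Prop :=
  f ∈ Submodule.span K
    {g | ∃ σ : Equiv.Perm (Fin d),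
      g = (List.ofFn fun i => FreeAlgebra.ι K (σ i)).prod}

/-!
Evaluation of a multilinear `f` is multilinear in the arguments, so on `F ⊗[S] A` it vanishes
as soon as it vanishes on tuples of pure tensors `(tᵢ ⊗ aᵢ)ᵢ`. Since `F` is commutative, each
monomial of `f` sends such a tuple to `(∏ tᵢ) ⊗ (its value at (aᵢ)ᵢ)`, so `f` sends it to
`(∏ tᵢ) ⊗ f(a) = 0`.
-/

theorem Algebra.TensorProduct.list_prod_ofFn_tmul {S F A : Type*} [CommSemiring S]
    [CommSemiring F] [Semiring A] [Algebra S F] [Algebra S A] {n : ℕ}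
    (t : Fin n → F) (a : Fin n → A) :
    (List.ofFn fun i => t i ⊗ₜ[S] a i).prod = (∏ i, t i) ⊗ₜ[S] (List.ofFn a).prod := by
  induction n with
  | zero => simp [Algebra.TensorProduct.one_def]
  | succ n ih =>
    rw [List.ofFn_succ, List.ofFn_succ (f := a), List.prod_cons, List.prod_cons,
      ih (fun i => t i.succ) (fun i => a i.succ), Algebra.TensorProduct.tmul_mul_tmul,
      Fin.prod_univ_succ]

namespace IsMultilinearPoly

variable {S : Type*} [CommSemiring S] {d : ℕ} {f : FreeAlgebra S (Fin d)}

theorem exists_multilinearMap_eq_lift (hf : IsMultilinearPoly S d f)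
    (B : Type*) [Semiring B] [Algebra S B] :
    ∃ T : MultilinearMap S (fun _ : Fin d => B) B, ∀ r, T r = FreeAlgebra.lift S r f := by
  induction hf using Submodule.span_induction with
  | mem g hg =>
    obtain ⟨σ, rfl⟩ := hg
    refine ⟨(MultilinearMap.mkPiAlgebraFin S d B).domDomCongr σ, fun r => ?_⟩
    simp [map_list_prod, List.map_ofFn, Function.comp_def]
  | zero => exact ⟨0, fun r => by simp⟩
  | add x y _ _ hx hy =>
    obtain ⟨T₁, h₁⟩ := hx
    obtain ⟨T₂, h₂⟩ := hy
    exact ⟨T₁ + T₂, fun r => by simp [h₁ r, h₂ r]⟩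
  | smul c x _ hx =>
    obtain ⟨T, h⟩ := hx
    exact ⟨c • T, fun r => by simp [h r]⟩

theorem lift_tmul (hf : IsMultilinearPoly S d f) {F A : Type*} [CommSemiring F] [Semiring A]
    [Algebra S F] [Algebra S A] (t : Fin d → F) (a : Fin d → A) :
    FreeAlgebra.lift S (fun i => t i ⊗ₜ[S] a i) f = (∏ i, t i) ⊗ₜ[S] FreeAlgebra.lift S a f := by
  let lhs := (FreeAlgebra.lift S fun i => t i ⊗ₜ[S] a i).toLinearMap
  let rhs := TensorProduct.mk S F A (∏ i, t i) ∘ₗ (FreeAlgebra.lift S a).toLinearMap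
  suffices f ∈ LinearMap.eqLocus lhs rhs from this
  refine Submodule.span_le.mpr ?_ hf
  rintro _ ⟨σ, rfl⟩
  simp only [SetLike.mem_coe, LinearMap.mem_eqLocus, lhs, rhs, LinearMap.comp_apply,
    AlgHom.toLinearMap_apply, TensorProduct.mk_apply, map_list_prod, List.map_ofFn,
    Function.comp_def, FreeAlgebra.lift_ι_apply]
  rw [Algebra.TensorProduct.list_prod_ofFn_tmul, Equiv.prod_comp σ t]

end IsMultilinearPoly

/-- Evaluating the image of `f ∈ S⟨X⟩` in `F⟨X⟩` on `F ⊗[S] A` is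
the same as evaluating `f` via the `S`-algebra structure of `F ⊗[S] A`. -/
theorem stmt3 {S F : Type*} [Field S] [Field F] [Algebra S F]
    {A : Type*} [Ring A] [Algebra S A] {d : ℕ}
    (f : FreeAlgebra S (Fin d)) (hml : IsMultilinearPoly S d f)
    (hPI : ∀ r : Fin d → A, FreeAlgebra.lift S r f = 0) :
    ∀ r : Fin d → F ⊗[S] A, FreeAlgebra.lift S r f = 0 := by
  obtain ⟨T, hT⟩ := hml.exists_multilinearMap_eq_lift (F ⊗[S] A)
  have hT_zero : T = 0 := by
    let bF := Module.Basis.ofVectorSpace S F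
    let bA := Module.Basis.ofVectorSpace S A
    refine Module.Basis.ext_multilinear (fun _ => bF.tensorProduct bA) fun v => ?_
    simpa [Module.Basis.tensorProduct_apply', hT, hPI] using
      hml.lift_tmul (fun i => bF (v i).1) (fun i => bA (v i).2)
  intro r
  rw [← hT r, hT_zero, zero_apply]
end

section
/- Let K be an infinite field, R a K-algebra, and f ∈ K⟨x₁,...,x_d⟩ a polynomial identity for R. Then each multihomogeneous component of f (the sum of monomials of f having a fixed degree in each variable x₁,...,x_d) is also a polynomial identity for R. -/
open scoped Classical

/-- The multidegree of a word in the free monoid on `Fin d`. -/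
def wordMultidegree {d : ℕ} (w : FreeMonoid (Fin d)) : Fin d → ℕ :=
  fun i => (FreeMonoid.toList w).count i

/-- The multihomogeneous component of multidegree `m` of `f ∈ K⟨x₁,…,x_d⟩`:
the sum of the terms of `f` whose monomials have degree `m i` in each `xᵢ`. -/
noncomputable def multihomComponent {K : Type*} [CommRing K] {d : ℕ}
    (m : Fin d → ℕ) (f : FreeAlgebra K (Fin d)) : FreeAlgebra K (Fin d) :=
  (FreeAlgebra.equivMonoidAlgebraFreeMonoid (R := K) (X := Fin d)).symm
    (MonoidAlgebra.ofCoeff (((FreeAlgebra.equivMonoidAlgebraFreeMonoid (R := K) (X := Fin d)) f).coeff.filter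
      (fun w => wordMultidegree w = m)))

/-!
Substituting `λᵢ • rᵢ` for `xᵢ` multiplies a word of multidegree `m` by `∏ λᵢ ^ mᵢ`, so the
identity `f(λ • r) = 0` says that the `R`-valued polynomial function
`λ ↦ ∑ₘ λ^m • f_m(r)` vanishes on `K^d`. Over an infinite field such a function has zero
coefficients (test against every linear functional on `R` and use `MvPolynomial.funext`),
hence every component `f_m(r)` vanishes.
-/

theorem wordMultidegree_mul {d : ℕ} (v w : FreeMonoid (Fin d)) :
    wordMultidegree (v * w) = wordMultidegree v + wordMultidegree w := by
  ext i; simp [wordMultidegree]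

theorem wordMultidegree_of {d : ℕ} (a : Fin d) :
    wordMultidegree (FreeMonoid.of a) = Pi.single a 1 := by
  ext i; simp [wordMultidegree, Pi.single_apply, List.count_singleton, @eq_comm _ a i]

section

variable {K : Type*} [CommRing K] {R : Type*} [Ring R] [Algebra K R]

open FreeAlgebra

theorem FreeAlgebra.lift_eq_sum_coeff {X : Type*} (r : X → R) (x : FreeAlgebra K X) :
    lift K r x = (equivMonoidAlgebraFreeMonoid x).coeff.sum fun w c => c • FreeMonoid.lift r w := by
  have : (MonoidAlgebra.lift K R (FreeMonoid X) (FreeMonoid.lift r)).comp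
      (equivMonoidAlgebraFreeMonoid (R := K) (X := X)).toAlgHom = lift K r :=
    hom_ext <| funext fun i => by simp [equivMonoidAlgebraFreeMonoid]
  rw [← this]
  simp [MonoidAlgebra.lift_apply]

variable {d : ℕ}

theorem FreeMonoid.lift_smul_eq_prod_pow_smul (l : Fin d → K) (r : Fin d → R)
    (w : FreeMonoid (Fin d)) :
    FreeMonoid.lift (fun i => l i • r i) w =
      (∏ i, l i ^ wordMultidegree w i) • FreeMonoid.lift r w := by
  induction w using FreeMonoid.inductionOn' with
  | one => simp [wordMultidegree]
  | of_mul a w ih =>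
    rw [map_mul, map_mul, ih, wordMultidegree_mul, wordMultidegree_of]
    simp only [FreeMonoid.lift_eval_of, Pi.add_apply, pow_add, Finset.prod_mul_distrib]
    simp [Pi.single_apply, Finset.prod_ite_eq', smul_smul, mul_comm]

theorem lift_multihomComponent (r : Fin d → R) (m : Fin d → ℕ) (f : FreeAlgebra K (Fin d)) :
    lift K r (multihomComponent m f) =
      ∑ w ∈ (equivMonoidAlgebraFreeMonoid f).coeff.support with wordMultidegree w = m,
        (equivMonoidAlgebraFreeMonoid f).coeff w • FreeMonoid.lift r w := by
  rw [lift_eq_sum_coeff, multihomComponent, AlgEquiv.apply_symm_apply,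
    MonoidAlgebra.coeff_ofCoeff, Finsupp.sum, Finsupp.support_filter]
  refine Finset.sum_congr rfl fun w hw => ?_
  rw [Finsupp.filter_apply_pos (fun w => wordMultidegree w = m) _ (Finset.mem_filter.mp hw).2]

theorem lift_smul_eq_sum_multihomComponent (l : Fin d → K) (r : Fin d → R)
    (f : FreeAlgebra K (Fin d)) (M : Finset (Fin d → ℕ))
    (hM : ∀ w ∈ (equivMonoidAlgebraFreeMonoid f).coeff.support, wordMultidegree w ∈ M) :
    lift K (fun i => l i • r i) f =
      ∑ m ∈ M, (∏ i, l i ^ m i) • lift K r (multihomComponent m f) := by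
  rw [lift_eq_sum_coeff, Finsupp.sum, ← Finset.sum_fiberwise_of_maps_to hM]
  refine Finset.sum_congr rfl fun m _ => ?_
  rw [lift_multihomComponent, Finset.smul_sum]
  refine Finset.sum_congr rfl fun w hw => ?_
  rw [FreeMonoid.lift_smul_eq_prod_pow_smul, (Finset.mem_filter.mp hw).2, smul_comm]

end

theorem eq_zero_of_forall_sum_prod_pow_smul_eq_zero {K : Type*} [Field K] [Infinite K]
    {V : Type*} [AddCommGroup V] [Module K V] {σ : Type*} [Fintype σ]
    (M : Finset (σ → ℕ)) (c : (σ → ℕ) → V)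
    (h : ∀ l : σ → K, ∑ m ∈ M, (∏ i, l i ^ m i) • c m = 0) {m₀ : σ → ℕ} (hm₀ : m₀ ∈ M) :
    c m₀ = 0 := by
  refine (Module.forall_dual_apply_eq_zero_iff K _).mp fun φ => ?_
  let P : MvPolynomial σ K :=
    ∑ m ∈ M, MvPolynomial.monomial (Finsupp.equivFunOnFinite.symm m) (φ (c m))
  have hP : P = 0 := MvPolynomial.funext fun l => by
    simpa [P, MvPolynomial.eval_monomial, Finsupp.prod_pow, mul_comm] using congrArg φ (h l)
  have := congrArg (MvPolynomial.coeff (Finsupp.equivFunOnFinite.symm m₀)) hP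
  rwa [MvPolynomial.coeff_sum, Finset.sum_eq_single_of_mem m₀ hm₀ fun m _ hm => ?_,
    MvPolynomial.coeff_monomial, if_pos rfl] at this
  rw [MvPolynomial.coeff_monomial, if_neg (Finsupp.equivFunOnFinite.symm.injective.ne hm)]

theorem stmt4 {K : Type*} [Field K] [Infinite K]
    {R : Type*} [Ring R] [Algebra K R] {d : ℕ}
    (f : FreeAlgebra K (Fin d))
    (hPI : ∀ r : Fin d → R, FreeAlgebra.lift K r f = 0) :
    ∀ (m : Fin d → ℕ) (r : Fin d → R),
      FreeAlgebra.lift K r (multihomComponent m f) = 0 := by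
  intro m r
  -- `m` is inserted so that it lies in `M` even when `f` has no word of multidegree `m`.
  let M := insert m
    ((FreeAlgebra.equivMonoidAlgebraFreeMonoid f).coeff.support.image wordMultidegree)
  refine eq_zero_of_forall_sum_prod_pow_smul_eq_zero (K := K) M
    (fun m' => FreeAlgebra.lift K r (multihomComponent m' f)) (fun l => ?_)
    (Finset.mem_insert_self m _)
  rw [← lift_smul_eq_sum_multihomComponent l r f M
    fun w hw => Finset.mem_insert_of_mem (Finset.mem_image_of_mem _ hw)]
  exact hPI _
end
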